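/- arXiv:math/0408082 — 5 statements merged into one kernel-verified Lean document; each statement's English description precedes it below -/
import Mathlib

section
/- For every real number x with 0 < |x| < 2π, the series \(\sum_{n\ge 0} B_{2n} x^{2n}/(2n)!\) converges and its sum equals \((x/2)\coth(x/2)\). -/
/-!
The Bernoulli generating function `B(t) = ∑ Bₙ tⁿ / n!` satisfies `B(t) (eᵗ - 1) = t` as a
formal power series. Euler's formula `ζ(2k) = (-1)^(k+1) (2π)^(2k) B₂ₖ / (2 (2k)!)`
together with `ζ(2k) ≤ ζ(2) < 2` gives `|Bₙ / n!| ≤ 4 / (2π)ⁿ`, so for `|x| < 2π` the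
series converges absolutely, and the Cauchy product turns the formal identity into
`B(x) = x / (eˣ - 1)`.
Since `B₁ = -1/2` is the only nonzero odd-index term, the even part of the series is
`x / (eˣ - 1) + x / 2 = (x / 2) coth (x / 2)`.
-/

open Real Finset

theorem PowerSeries.hasSum_coeff_mul_mul_pow {R : Type*} [NormedCommRing R] [CompleteSpace R]
    {f g : PowerSeries R} {x : R} (hf : Summable fun n => ‖coeff n f * x ^ n‖)
    (hg : Summable fun n => ‖coeff n g * x ^ n‖) :
    HasSum (fun n => coeff n (f * g) * x ^ n)
      ((∑' n, coeff n f * x ^ n) * ∑' n, coeff n g * x ^ n) := by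
  have hterm : ∀ n, coeff n (f * g) * x ^ n =
      ∑ kl ∈ antidiagonal n, (coeff kl.1 f * x ^ kl.1) * (coeff kl.2 g * x ^ kl.2) := by
    intro n
    rw [coeff_mul, sum_mul]
    refine sum_congr rfl fun kl hkl => ?_
    rw [← mem_antidiagonal.mp hkl, pow_add]
    ring
  simp only [hterm]
  rw [tsum_mul_tsum_eq_tsum_sum_antidiagonal_of_summable_norm hf hg]
  exact (summable_norm_sum_mul_antidiagonal_of_summable_norm hf hg).of_norm.hasSum

theorem two_pi_pow_mul_abs_bernoulli_div_factorial_le {k : ℕ} (hk : k ≠ 0) :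
    (2 * π) ^ (2 * k) * |(bernoulli (2 * k) : ℝ) / (2 * k).factorial| ≤ π ^ 2 / 3 := by
  have hζ := hasSum_zeta_nat hk
  set ζ := (-1 : ℝ) ^ (k + 1) * 2 ^ (2 * k - 1) * π ^ (2 * k) * bernoulli (2 * k) /
    (2 * k).factorial
  have hζ_nonneg : 0 ≤ ζ := hζ.nonneg fun n => by positivity
  have hζ_le : ζ ≤ π ^ 2 / 6 := by
    refine hasSum_le (fun n => ?_) hζ hasSum_zeta_two
    rcases Nat.eq_zero_or_pos n with rfl | hn
    · simp [hk]
    · gcongr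
      · exact_mod_cast hn
      · omega
  have habs : (2 * π) ^ (2 * k) * |(bernoulli (2 * k) : ℝ) / (2 * k).factorial| = 2 * |ζ| := by
    obtain ⟨j, rfl⟩ : ∃ j, k = j + 1 := ⟨k - 1, by omega⟩
    simp only [ζ, show 2 * (j + 1) - 1 = 2 * j + 1 by omega, abs_div, abs_mul, abs_pow, abs_neg,
      abs_one, one_pow, one_mul, abs_two, abs_of_pos pi_pos, Nat.abs_cast]
    ring
  rw [habs, abs_of_nonneg hζ_nonneg]
  linarith

theorem abs_bernoulli_div_factorial_le (n : ℕ) :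
    |(bernoulli n : ℝ) / n.factorial| ≤ 4 / (2 * π) ^ n := by
  rcases Nat.even_or_odd n with ⟨k, rfl⟩ | hodd
  · rcases eq_or_ne k 0 with rfl | hk
    · norm_num
    rw [← two_mul, le_div_iff₀' (by positivity)]
    nlinarith [two_pi_pow_mul_abs_bernoulli_div_factorial_le hk, pi_lt_d2, pi_pos]
  rcases eq_or_ne n 1 with rfl | hn
  · rw [bernoulli_one, le_div_iff₀' (by positivity)]
    norm_num
    linarith [pi_le_four]
  · rw [bernoulli_eq_zero_of_odd hodd (by grind)]
    simp only [Rat.cast_zero, zero_div, abs_zero]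
    positivity

theorem summable_norm_bernoulli_mul_pow_div_factorial {x : ℝ} (hx : |x| < 2 * π) :
    Summable fun n => ‖(bernoulli n : ℝ) * x ^ n / n.factorial‖ := by
  have hr : |x| / (2 * π) < 1 := (div_lt_one (by positivity)).mpr hx
  refine .of_nonneg_of_le (fun n => norm_nonneg _) (fun n => ?_)
    ((summable_geometric_of_lt_one (by positivity) hr).mul_left 4)
  calc ‖(bernoulli n : ℝ) * x ^ n / n.factorial‖
    _ = |(bernoulli n : ℝ) / n.factorial| * |x| ^ n := by
      rw [Real.norm_eq_abs, mul_div_right_comm, abs_mul, abs_pow]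
    _ ≤ 4 / (2 * π) ^ n * |x| ^ n := by gcongr; exact abs_bernoulli_div_factorial_le n
    _ = 4 * (|x| / (2 * π)) ^ n := by rw [div_pow]; ring

theorem hasSum_bernoulli_mul_pow_div_factorial {x : ℝ} (hx0 : x ≠ 0) (hx : |x| < 2 * π) :
    HasSum (fun n => (bernoulli n : ℝ) * x ^ n / n.factorial) (x / (exp x - 1)) := by
  have hB : ∀ n, PowerSeries.coeff n (bernoulliPowerSeries ℝ) * x ^ n =
      (bernoulli n : ℝ) * x ^ n / n.factorial := fun n => by
    simp only [bernoulliPowerSeries, PowerSeries.coeff_mk, eq_ratCast]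
    push_cast
    ring
  have hE : ∀ n, PowerSeries.coeff n (PowerSeries.exp ℝ) * x ^ n = x ^ n / n.factorial :=
      fun n => by
    simp only [PowerSeries.coeff_exp, eq_ratCast]
    push_cast
    ring
  have hsum := PowerSeries.hasSum_coeff_mul_mul_pow (f := bernoulliPowerSeries ℝ)
    (g := PowerSeries.exp ℝ) (x := x) (by simpa only [hB] using
      summable_norm_bernoulli_mul_pow_div_factorial hx)
    (by simpa only [hE] using NormedSpace.norm_expSeries_div_summable x)
  have hprod : bernoulliPowerSeries ℝ * PowerSeries.exp ℝ =
      bernoulliPowerSeries ℝ + PowerSeries.X := by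
    linear_combination bernoulliPowerSeries_mul_exp_sub_one ℝ
  have hexp_sum : ∑' n, x ^ n / n.factorial = exp x := by
    rw [Real.exp_eq_exp_ℝ]; exact (NormedSpace.expSeries_div_hasSum_exp x).tsum_eq
  simp only [hprod, map_add, add_mul, hB, hE, PowerSeries.coeff_X, ite_mul, one_mul, zero_mul,
    hexp_sum] at hsum
  set S := ∑' n, (bernoulli n : ℝ) * x ^ n / n.factorial
  have hS : HasSum (fun n => (bernoulli n : ℝ) * x ^ n / n.factorial) S :=
    (summable_norm_bernoulli_mul_pow_div_factorial hx).of_norm.hasSum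
  have hrel : S * exp x = S + x := hsum.unique <| by
    refine (hS.add (hasSum_ite_eq 1 x)).congr_fun fun n => ?_
    split_ifs with h <;> simp [h]
  have hexp : exp x - 1 ≠ 0 := by
    rw [sub_ne_zero, Ne, exp_eq_one_iff]; exact hx0
  convert hS using 1
  field_simp
  linarith

theorem hasSum_bernoulli_two_mul_mul_pow_div_factorial {x : ℝ} (hx0 : x ≠ 0)
    (hx : |x| < 2 * π) :
    HasSum (fun n => (bernoulli (2 * n) : ℝ) * x ^ (2 * n) / (2 * n).factorial)
      (x / (exp x - 1) + x / 2) := by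
  set c : ℕ → ℝ := fun n => (bernoulli n : ℝ) * x ^ n / n.factorial
  have hodd : HasSum (fun k => c (2 * k + 1)) (-(x / 2)) := by
    refine (hasSum_ite_eq 0 (-(x / 2))).congr_fun fun k => ?_
    rcases eq_or_ne k 0 with rfl | hk
    · norm_num [c, bernoulli_one, neg_div, div_mul_eq_mul_div]
    · simp [c, hk, bernoulli_eq_zero_of_odd (odd_two_mul_add_one k) (by omega)]
  have heven : Summable fun k => c (2 * k) :=
    ((summable_norm_bernoulli_mul_pow_div_factorial hx).comp_injective
      (mul_right_injective₀ two_ne_zero)).of_norm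
  have hsplit := (hasSum_bernoulli_mul_pow_div_factorial hx0 hx).unique
    (heven.hasSum.even_add_odd hodd)
  rw [hsplit]
  convert heven.hasSum using 1
  ring

theorem div_exp_sub_one_add_half_eq {x : ℝ} (hx : x ≠ 0) :
    x / (exp x - 1) + x / 2 = x / 2 * (cosh (x / 2) / sinh (x / 2)) := by
  have hu : exp x = exp (x / 2) ^ 2 := by rw [← exp_nat_mul]; ring_nf
  have hne : exp (x / 2) ^ 2 - 1 ≠ 0 := by
    rw [← hu, sub_ne_zero, Ne, exp_eq_one_iff]; exact hx
  rw [cosh_eq, sinh_eq, exp_neg, hu]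
  field_simp
  ring

theorem hasSum_bernoulli_coth (x : ℝ) (hx : 0 < |x|) (hx' : |x| < 2 * π) :
    HasSum (fun n : ℕ => (bernoulli (2 * n) : ℝ) * x ^ (2 * n) / (Nat.factorial (2 * n) : ℝ))
      (x / 2 * (Real.cosh (x / 2) / Real.sinh (x / 2))) := by
  have hx0 : x ≠ 0 := abs_pos.mp hx
  rw [← div_exp_sub_one_add_half_eq hx0]
  exact hasSum_bernoulli_two_mul_mul_pow_div_factorial hx0 hx'
end

section
/- For every real number x with |x| < π/2, the series \(\sum_{n\ge 1} (-1)^n\, 2(1 - 4^n) B_{2n} (2x)^{2n-1}/(2n)!\) converges and its sum equals \(\tan(x)\). -/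
/-!
Put `y = iX` and let `B(z) = z/(eᶻ - 1)` be the Bernoulli generating function. Since
`1/(eᶻ - 1) - 2/(e²ᶻ - 1) = 1/(eᶻ + 1)`, we get `B(2y) - B(4y) = 2y/(e²ʸ + 1)`, and
`e²ʸ + 1 = eʸ (eʸ + e⁻ʸ) = 2 eʸ cos X`; hence `B(2y) - B(4y) - y = X tan X` as formal power
series, which gives the coefficients of `tan` and the identity `tan · cos = sin`.
Euler's formula for `ζ(2k) ≤ ζ(2) < 2` bounds `|B₂ₖ|/(2k)!` by `4/(2π)²ᵏ`, so the tangent series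
converges absolutely for `|x| < π/2`, and its Cauchy product with the cosine series is the sine
series.
-/

open Real

namespace PowerSeries

open Nat

section

variable (A A' : Type*) [Ring A] [Ring A'] [Algebra ℚ A] [Algebra ℚ A']

def tan : PowerSeries A :=
  mk fun n => if Even n then 0 else
    algebraMap ℚ A ((-4) ^ (n / 2 + 1) * (1 - 4 ^ (n / 2 + 1)) * bernoulli (n + 1) / (n + 1)!)

variable {A A'}

@[simp]
theorem map_tan (f : A →+* A') : map f (tan A) = tan A' := by
  ext
  simp [tan, apply_ite f]

theorem coeff_tan_two_mul_add_one (k : ℕ) :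
    coeff (2 * k + 1) (tan A) = algebraMap ℚ A
      ((-4) ^ (k + 1) * (1 - 4 ^ (k + 1)) * bernoulli (2 * (k + 1)) / (2 * (k + 1))!) := by
  have hk : (2 * k + 1) / 2 = k := by omega
  simp [tan, hk, Nat.mul_add]

theorem coeff_tan_of_even {n : ℕ} (hn : Even n) : coeff n (tan A) = 0 := by
  simp [tan, hn]

end

section

variable {A : Type*} [CommRing A] [Algebra ℚ A]

theorem rescale_exp_eq_cos_add_mul_sin {i : A} (hi : i ^ 2 = -1) :
    rescale i (exp A) = cos A + C i * sin A := by
  ext n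
  obtain ⟨k, rfl | rfl⟩ := n.even_or_odd'
  · have hpow : i ^ (2 * k) = (-1) ^ k := by rw [pow_mul, hi]
    simp [coeff_rescale, coeff_exp, cos, sin, hpow, div_eq_mul_inv]
  · have hpow : i ^ (2 * k + 1) = (-1) ^ k * i := by rw [pow_succ, pow_mul, hi]
    have hk : (2 * k + 1) / 2 = k := by omega
    simp only [coeff_rescale, hpow, coeff_exp, div_eq_mul_inv, one_mul, cos, sin, map_mul,
      map_pow, map_neg, map_one, map_add, coeff_mk, not_even_bit1, ↓reduceIte, coeff_C_mul, hk,
      zero_add]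
    ring

theorem X_mul_tan {i : A} (hi : i ^ 2 = -1) :
    X * tan A =
      rescale (2 * i) (bernoulliPowerSeries A) - rescale (4 * i) (bernoulliPowerSeries A) -
        C i * X := by
  ext (_ | m)
  · simp only [coeff_zero_X_mul, map_sub, coeff_rescale, pow_zero, one_mul, sub_self,
      coeff_C_mul, coeff_zero_X, mul_zero]
  rw [coeff_succ_X_mul]
  simp only [bernoulliPowerSeries, map_sub, coeff_rescale, coeff_mk, coeff_C_mul, coeff_X]
  obtain ⟨k, rfl | rfl⟩ := m.even_or_odd'
  · rw [coeff_tan_of_even (even_two_mul k)]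
    rcases eq_or_ne k 0 with rfl | hk
    · have half : 2 * algebraMap ℚ A (-1 / 2) = -1 := by
        rw [← map_ofNat (algebraMap ℚ A) 2, ← map_mul]
        norm_num
      simp only [mul_zero, zero_add, pow_one, bernoulli_one, factorial_one, cast_one,
        div_one, ↓reduceIte, mul_one]
      linear_combination i * half
    · rw [bernoulli_eq_zero_of_odd (odd_two_mul_add_one k) (by omega), if_neg (by omega)]
      simp
  · have hpow (c : A) : (c * i) ^ (2 * k + 1 + 1) = (-c ^ 2) ^ (k + 1) := by
      rw [show 2 * k + 1 + 1 = 2 * (k + 1) by ring, pow_mul, mul_pow, hi]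
      ring
    rw [coeff_tan_two_mul_add_one, hpow, hpow, if_neg (by omega),
      show -(4 : A) ^ 2 = -4 * 4 by norm_num, mul_pow,
      show 2 * k + 1 + 1 = 2 * (k + 1) by ring, mul_div_assoc]
    simp only [map_mul, map_sub, map_pow, map_neg, map_ofNat, map_one]
    ring

variable [IsDomain A]

theorem rescale_bernoulliPowerSeries_sub_mul_rescale_exp_add_one (a : A) :
    (rescale a (bernoulliPowerSeries A) - rescale (2 * a) (bernoulliPowerSeries A)) *
      (rescale a (exp A) + 1) = C a * X := by
  rcases eq_or_ne a 0 with rfl | ha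
  · simp
  set E := rescale a (exp A)
  have hB (b : A) :
      rescale b (bernoulliPowerSeries A) * (rescale b (exp A) - 1) = C b * X := by
    simpa [rescale_X] using congrArg (rescale b) (bernoulliPowerSeries_mul_exp_sub_one A)
  have hE2 : rescale (2 * a) (exp A) = E * E := by rw [exp_mul_exp_eq_exp_add, two_mul]
  have hE1 : E - 1 ≠ 0 := fun h ↦ ha <| by
    simpa [E, coeff_rescale, coeff_exp] using congrArg (coeff 1) h
  have hB2 := hB (2 * a)
  rw [hE2, map_mul, map_ofNat] at hB2
  refine mul_right_cancel₀ hE1 ?_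
  linear_combination (E + 1) * hB a - hB2

theorem tan_mul_cos_of_sq_eq_neg_one {i : A} (hi : i ^ 2 = -1) : tan A * cos A = sin A := by
  have := algebraRat.charZero A⟦X⟧
  set D := rescale (2 * i) (bernoulliPowerSeries A) - rescale (4 * i) (bernoulliPowerSeries A)
  set E := rescale i (exp A)
  set F := rescale (-i) (exp A)
  have hD : D * (E * E + 1) = 2 * C i * X := by
    have hE2 : rescale (2 * i) (exp A) = E * E := by rw [exp_mul_exp_eq_exp_add, two_mul]
    have := rescale_bernoulliPowerSeries_sub_mul_rescale_exp_add_one (2 * i)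
    rwa [show 2 * (2 * i) = 4 * i by ring, hE2, map_mul, map_ofNat] at this
  have hEF : E * F = 1 := by
    rw [exp_mul_exp_eq_exp_add, add_neg_cancel, rescale_zero]
    simp
  have hE : E = cos A + C i * sin A := rescale_exp_eq_cos_add_mul_sin hi
  have hF : F = cos A - C i * sin A :=
    (rescale_exp_eq_cos_add_mul_sin (by rwa [neg_sq])).trans
      (by rw [map_neg, neg_mul, ← sub_eq_add_neg])
  have hCi : C i * C i = -1 := by rw [← map_mul, ← sq, hi, map_neg, map_one]
  -- `E * E + 1 = E * (E + F) = 2 * cos * E`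
  have hDcos : D * cos A = C i * X * F := by
    refine mul_left_cancel₀ two_ne_zero ?_
    linear_combination F * (hD - D * E * (hE + hF) + D * hEF) - 2 * D * cos A * hEF
  refine mul_left_cancel₀ X_ne_zero ?_
  linear_combination cos A * X_mul_tan hi + hDcos + C i * X * hF - X * sin A * hCi

end

theorem tan_mul_cos (A : Type*) [Ring A] [Algebra ℚ A] : tan A * cos A = sin A := by
  have hℚ : tan ℚ * cos ℚ = sin ℚ := map_injective _ (algebraMap ℚ ℂ).injective <| by
    simpa using tan_mul_cos_of_sq_eq_neg_one Complex.I_sq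
  simpa using congrArg (map (algebraMap ℚ A)) hℚ

theorem tsum_mul_tsum_eq_tsum_coeff_mul_mul_pow {R : Type*} [NormedCommRing R]
    [CompleteSpace R] {f g : R⟦X⟧} {x : R} (hf : Summable fun n ↦ ‖coeff n f * x ^ n‖)
    (hg : Summable fun n ↦ ‖coeff n g * x ^ n‖) :
    (∑' n, coeff n f * x ^ n) * (∑' n, coeff n g * x ^ n) = ∑' n, coeff n (f * g) * x ^ n := by
  rw [tsum_mul_tsum_eq_tsum_sum_antidiagonal_of_summable_norm hf hg]
  refine tsum_congr fun n ↦ ?_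
  rw [coeff_mul, Finset.sum_mul]
  refine Finset.sum_congr rfl fun p hp ↦ ?_
  rw [← Finset.HasAntidiagonal.mem_antidiagonal.mp hp, pow_add]
  ring

end PowerSeries

namespace Real

open PowerSeries Nat

theorem hasSum_coeff_cos_mul_pow (x : ℝ) :
    HasSum (fun n ↦ coeff n (PowerSeries.cos ℝ) * x ^ n) (cos x) := by
  rw [← add_zero (cos x)]
  refine HasSum.even_add_odd ?_ ?_
  · convert hasSum_cos x using 2 with k
    simp [PowerSeries.cos, div_mul_eq_mul_div]
  · convert hasSum_zero using 2 with k
    simp [PowerSeries.cos]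

theorem hasSum_coeff_sin_mul_pow (x : ℝ) :
    HasSum (fun n ↦ coeff n (PowerSeries.sin ℝ) * x ^ n) (sin x) := by
  rw [← zero_add (sin x)]
  refine HasSum.even_add_odd ?_ ?_
  · convert hasSum_zero using 2 with k
    simp [PowerSeries.sin]
  · convert hasSum_sin x using 2 with k
    simp [PowerSeries.sin, div_mul_eq_mul_div, show (2 * k + 1) / 2 = k by omega]

theorem summable_norm_coeff_cos_mul_pow (x : ℝ) :
    Summable fun n ↦ ‖coeff n (PowerSeries.cos ℝ) * x ^ n‖ := by
  refine Summable.of_nonneg_of_le (fun n ↦ norm_nonneg _) (fun n ↦ ?_)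
    (summable_pow_div_factorial |x|)
  rw [norm_mul, norm_pow, norm_eq_abs, norm_eq_abs, div_eq_inv_mul]
  gcongr
  simp only [PowerSeries.cos, coeff_mk]
  split_ifs <;> simp [abs_div]

theorem abs_bernoulli_two_mul_div_factorial_le {k : ℕ} (hk : k ≠ 0) :
    |(bernoulli (2 * k) : ℝ)| / (2 * k)! ≤ 4 / (2 * π) ^ (2 * k) := by
  have hζ := hasSum_zeta_nat hk
  have hζ_nonneg := hζ.nonneg fun n ↦ by positivity
  have hterm (n : ℕ) : 1 / (n : ℝ) ^ (2 * k) ≤ 1 / (n : ℝ) ^ 2 := by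
    rcases eq_or_ne n 0 with rfl | hn
    · simp [hk]
    · gcongr
      · exact_mod_cast Nat.one_le_iff_ne_zero.mpr hn
      · omega
  have hζ_le := hasSum_le hterm hζ hasSum_zeta_two
  rw [← abs_of_nonneg hζ_nonneg] at hζ_le
  simp only [abs_div, abs_mul, abs_pow, abs_neg, abs_one, one_pow, one_mul, abs_two,
    abs_of_pos pi_pos, Nat.abs_cast] at hζ_le
  rw [div_le_iff₀ (by positivity)] at hζ_le
  have hπ : π ^ 2 / 6 * (2 * k)! ≤ 2 * (2 * k)! := by
    gcongr
    nlinarith [pi_lt_d2, pi_pos]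
  rw [div_le_div_iff₀ (by positivity) (by positivity), mul_pow, ← mul_pow_sub_one (by omega) 2]
  linarith

theorem abs_coeff_tan_le (n : ℕ) : |coeff n (PowerSeries.tan ℝ)| ≤ 4 * (2 / π) ^ (n + 1) := by
  obtain ⟨k, rfl | rfl⟩ := n.even_or_odd'
  · rw [coeff_tan_of_even (even_two_mul k), abs_zero]
    positivity
  have hB := abs_bernoulli_two_mul_div_factorial_le k.succ_ne_zero
  have h4 : |1 - (4 : ℝ) ^ (k + 1)| ≤ 4 ^ (k + 1) := by
    have : (1 : ℝ) ≤ 4 ^ (k + 1) := one_le_pow₀ (by norm_num)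
    exact abs_le.mpr ⟨by linarith, by linarith⟩
  rw [coeff_tan_two_mul_add_one, eq_ratCast]
  push_cast
  calc |(-4 : ℝ) ^ (k + 1) * (1 - 4 ^ (k + 1)) * bernoulli (2 * (k + 1)) / (2 * (k + 1))!|
      = 4 ^ (k + 1) * |1 - (4 : ℝ) ^ (k + 1)| *
          (|(bernoulli (2 * (k + 1)) : ℝ)| / (2 * (k + 1))!) := by
        simp only [abs_div, abs_mul, abs_pow, abs_neg, Nat.abs_cast, abs_ofNat]
        ring
    _ ≤ 4 ^ (k + 1) * 4 ^ (k + 1) * (4 / (2 * π) ^ (2 * (k + 1))) := by gcongr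
    _ = 4 * (2 / π) ^ (2 * k + 1 + 1) := by
        rw [show 2 * k + 1 + 1 = 2 * (k + 1) by ring, mul_pow, div_pow, pow_mul (2 : ℝ)]
        field_simp
        norm_num

theorem summable_norm_coeff_tan_mul_pow {x : ℝ} (hx : |x| < π / 2) :
    Summable fun n ↦ ‖coeff n (PowerSeries.tan ℝ) * x ^ n‖ := by
  have hr : 2 / π * |x| < 1 := by
    rw [div_mul_eq_mul_div, div_lt_one pi_pos]
    linarith
  refine Summable.of_nonneg_of_le (fun n ↦ norm_nonneg _) (fun n ↦ ?_)
    ((summable_geometric_of_lt_one (by positivity) hr).mul_left (8 / π))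
  rw [norm_mul, norm_pow, norm_eq_abs, norm_eq_abs]
  calc |coeff n (PowerSeries.tan ℝ)| * |x| ^ n ≤ 4 * (2 / π) ^ (n + 1) * |x| ^ n := by
        gcongr
        exact abs_coeff_tan_le n
    _ = 8 / π * (2 / π * |x|) ^ n := by ring

theorem hasSum_coeff_tan_mul_pow {x : ℝ} (hx : |x| < π / 2) :
    HasSum (fun n ↦ coeff n (PowerSeries.tan ℝ) * x ^ n) (tan x) := by
  have hf := summable_norm_coeff_tan_mul_pow hx
  have hcos : cos x ≠ 0 := (cos_pos_of_mem_Ioo (abs_lt.mp hx)).ne'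
  have hsum := hf.of_norm.hasSum
  rwa [show ∑' n, coeff n (PowerSeries.tan ℝ) * x ^ n = tan x by
    rw [tan_eq_sin_div_cos, eq_div_iff hcos, ← (hasSum_coeff_cos_mul_pow x).tsum_eq,
      tsum_mul_tsum_eq_tsum_coeff_mul_mul_pow hf (summable_norm_coeff_cos_mul_pow x),
      PowerSeries.tan_mul_cos, (hasSum_coeff_sin_mul_pow x).tsum_eq]] at hsum

end Real

theorem hasSum_bernoulli_tan (x : ℝ) (hx : |x| < π / 2) :
    HasSum
      (fun n : ℕ =>
        (-1 : ℝ) ^ (n + 1) * (2 * (1 - (4 : ℝ) ^ (n + 1))) * (bernoulli (2 * (n + 1)) : ℝ) *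
          (2 * x) ^ (2 * (n + 1) - 1) / (Nat.factorial (2 * (n + 1)) : ℝ))
      (Real.tan x) := by
  have hodd : Function.Injective fun n : ℕ ↦ 2 * n + 1 := fun a b h ↦ by simpa using h
  have h := Real.hasSum_coeff_tan_mul_pow hx
  rw [← hodd.hasSum_iff] at h
  · convert h using 2 with n
    have h4 : (-4 : ℝ) ^ (n + 1) = (-1) ^ (n + 1) * 2 * 2 ^ (2 * n + 1) := by
      rw [show (-4 : ℝ) = -1 * 2 ^ 2 by norm_num, mul_pow, ← pow_mul]
      ring
    rw [Function.comp_apply, PowerSeries.coeff_tan_two_mul_add_one, eq_ratCast,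
      show 2 * (n + 1) - 1 = 2 * n + 1 by omega]
    push_cast
    rw [h4]
    ring
  · rintro m hm
    obtain ⟨k, rfl | rfl⟩ := m.even_or_odd'
    · rw [PowerSeries.coeff_tan_of_even (even_two_mul k), zero_mul]
    · exact absurd ⟨k, rfl⟩ hm
end

section
/- For every natural number n, the n-th Bernoulli number is given by the double sum \(B_n = \sum_{k=0}^{n} \frac{1}{k+1} \sum_{r=0}^{k} (-1)^r \binom{k}{r} r^n\). -/
open Finset

private def DD (n k : ℕ) : ℚ :=
  ∑ r ∈ Finset.range (k + 1), (-1 : ℚ) ^ r * (Nat.choose k r : ℚ) * (r : ℚ) ^ n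

private lemma DD_shift (n k : ℕ) :
    (∑ r ∈ Finset.range (k + 1), (-1 : ℚ) ^ r * (Nat.choose k r : ℚ) * ((r : ℚ) + 1) ^ n)
      = DD n k - DD n (k + 1) := by
  have h1 : DD n (k + 1)
      = ∑ s ∈ Finset.range (k + 1),
          (-1 : ℚ) ^ (s + 1) * (Nat.choose (k + 1) (s + 1) : ℚ) * ((s : ℚ) + 1) ^ n
        + (0 : ℚ) ^ n := by
    rw [DD, Finset.sum_range_succ' (fun r => (-1 : ℚ) ^ r * (Nat.choose (k+1) r : ℚ) * (r : ℚ) ^ n) (k + 1)]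
    push_cast
    simp [Nat.choose_zero_right]
  have h2 : ∑ s ∈ Finset.range (k + 1),
        (-1 : ℚ) ^ s * (Nat.choose k (s + 1) : ℚ) * ((s : ℚ) + 1) ^ n
      = -(DD n k) + (0 : ℚ) ^ n := by
    have hD : DD n k = ∑ s ∈ Finset.range k,
        (-1 : ℚ) ^ (s + 1) * (Nat.choose k (s + 1) : ℚ) * ((s : ℚ) + 1) ^ n + (0 : ℚ) ^ n := by
      rw [DD, Finset.sum_range_succ' (fun r => (-1 : ℚ) ^ r * (Nat.choose k r : ℚ) * (r : ℚ) ^ n) k]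
      push_cast
      simp [Nat.choose_zero_right]
    rw [Finset.sum_range_succ, Nat.choose_succ_self]
    rw [hD]
    push_cast
    have : ∀ s, (-1 : ℚ) ^ (s + 1) * (Nat.choose k (s + 1) : ℚ) * ((s : ℚ) + 1) ^ n
        = -((-1 : ℚ) ^ s * (Nat.choose k (s + 1) : ℚ) * ((s : ℚ) + 1) ^ n) := by
      intro s; ring
    rw [Finset.sum_congr rfl fun s _ => this s, Finset.sum_neg_distrib]
    ring
  have h3 : ∀ s, (Nat.choose (k + 1) (s + 1) : ℚ) = (Nat.choose k s : ℚ) + (Nat.choose k (s + 1) : ℚ) := by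
    intro s; rw [Nat.choose_succ_succ]; push_cast; ring
  rw [h1]
  have : ∀ s ∈ Finset.range (k + 1),
      (-1 : ℚ) ^ (s + 1) * (Nat.choose (k + 1) (s + 1) : ℚ) * ((s : ℚ) + 1) ^ n
      = -((-1 : ℚ) ^ s * (Nat.choose k s : ℚ) * ((s : ℚ) + 1) ^ n)
        - (-1 : ℚ) ^ s * (Nat.choose k (s + 1) : ℚ) * ((s : ℚ) + 1) ^ n := by
    intro s _; rw [h3 s]; ring
  rw [Finset.sum_congr rfl this, Finset.sum_sub_distrib, Finset.sum_neg_distrib, h2]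
  ring

private lemma DD_rec (n k : ℕ) :
    DD (n + 1) (k + 1) = ((k : ℚ) + 1) * (DD n (k + 1) - DD n k) := by
  have h0 : DD (n + 1) (k + 1)
      = ∑ s ∈ Finset.range (k + 1),
          (-1 : ℚ) ^ (s + 1) * (Nat.choose (k + 1) (s + 1) : ℚ) * ((s : ℚ) + 1) ^ (n + 1) := by
    rw [DD, Finset.sum_range_succ'
      (fun r => (-1 : ℚ) ^ r * (Nat.choose (k+1) r : ℚ) * (r : ℚ) ^ (n+1)) (k + 1)]
    push_cast
    rw [zero_pow (Nat.succ_ne_zero n)]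
    simp
  have hc : ∀ s : ℕ, (Nat.choose (k + 1) (s + 1) : ℚ) * ((s : ℚ) + 1)
      = ((k : ℚ) + 1) * (Nat.choose k s : ℚ) := by
    intro s
    have := Nat.add_one_mul_choose_eq k s
    have h : ((k + 1) * Nat.choose k s : ℕ) = (Nat.choose (k + 1) (s + 1) * (s + 1) : ℕ) := this
    have := congrArg (fun x : ℕ => (x : ℚ)) h
    push_cast at this
    linarith [this]
  have h1 : ∀ s ∈ Finset.range (k + 1),
      (-1 : ℚ) ^ (s + 1) * (Nat.choose (k + 1) (s + 1) : ℚ) * ((s : ℚ) + 1) ^ (n + 1)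
      = -(((k : ℚ) + 1) * ((-1 : ℚ) ^ s * (Nat.choose k s : ℚ) * ((s : ℚ) + 1) ^ n)) := by
    intro s _
    have : ((s : ℚ) + 1) ^ (n + 1) = ((s : ℚ) + 1) ^ n * ((s : ℚ) + 1) := by ring
    rw [this]
    have := hc s
    calc (-1 : ℚ) ^ (s + 1) * (Nat.choose (k + 1) (s + 1) : ℚ) * (((s : ℚ) + 1) ^ n * ((s : ℚ) + 1))
        = (-1 : ℚ) ^ (s + 1) * ((Nat.choose (k + 1) (s + 1) : ℚ) * ((s : ℚ) + 1)) * ((s : ℚ) + 1) ^ n := by ring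
      _ = (-1 : ℚ) ^ (s + 1) * (((k : ℚ) + 1) * (Nat.choose k s : ℚ)) * ((s : ℚ) + 1) ^ n := by rw [this]
      _ = -(((k : ℚ) + 1) * ((-1 : ℚ) ^ s * (Nat.choose k s : ℚ) * ((s : ℚ) + 1) ^ n)) := by ring
  rw [h0, Finset.sum_congr rfl h1, Finset.sum_neg_distrib, ← Finset.mul_sum, DD_shift]
  ring

private lemma DD_vanish : ∀ n k : ℕ, n < k → DD n k = 0 := by
  intro n
  induction n with
  | zero =>
    intro k hk
    obtain ⟨j, rfl⟩ : ∃ j, k = j + 1 := ⟨k - 1, by omega⟩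
    have h := Int.alternating_sum_range_choose_of_ne (n := j + 1) (by omega)
    rw [DD]
    have : ∀ r ∈ Finset.range (j + 2),
        (-1 : ℚ) ^ r * (Nat.choose (j + 1) r : ℚ) * (r : ℚ) ^ 0
        = (-1 : ℚ) ^ r * (Nat.choose (j + 1) r : ℚ) := by
      intro r _; rw [pow_zero, mul_one]
    rw [Finset.sum_congr rfl this]
    exact_mod_cast congrArg (fun x : ℤ => (x : ℚ)) h
  | succ n ih =>
    intro k hk
    obtain ⟨j, rfl⟩ : ∃ j, k = j + 1 := ⟨k - 1, by omega⟩
    rw [DD_rec, ih j (by omega), ih (j + 1) (by omega)]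
    ring

private lemma DD_telescope (n : ℕ) (hn : 1 ≤ n) :
    ∑ k ∈ Finset.range (n + 1), (1 : ℚ) / (k + 1) * DD (n + 1) (k + 1) = 0 := by
  have h1 : ∀ k ∈ Finset.range (n + 1),
      (1 : ℚ) / (k + 1) * DD (n + 1) (k + 1) = DD n (k + 1) - DD n k := by
    intro k _
    rw [DD_rec]
    have hk : ((k : ℚ) + 1) ≠ 0 := by positivity
    field_simp
  rw [Finset.sum_congr rfl h1, Finset.sum_range_sub (fun k => DD n k)]
  rw [DD_vanish n (n + 1) (by omega)]
  have : DD n 0 = 0 := by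
    rw [DD]
    simp [zero_pow (by omega : n ≠ 0)]
  rw [this, sub_zero]

private lemma binom_partial (n : ℕ) (x : ℚ) :
    ∑ j ∈ Finset.range (n + 1), (Nat.choose (n + 1) j : ℚ) * x ^ j
      = (x + 1) ^ (n + 1) - x ^ (n + 1) := by
  have h := add_pow x 1 (n + 1)
  simp only [one_pow, mul_one] at h
  rw [Finset.sum_range_succ] at h
  rw [Nat.choose_self] at h
  push_cast at h
  have : ∀ j ∈ Finset.range (n + 1), (Nat.choose (n + 1) j : ℚ) * x ^ j
      = x ^ j * (Nat.choose (n + 1) j : ℚ) := by intro j _; ring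
  rw [Finset.sum_congr rfl this]
  linarith [h]

private lemma DD_inner (n k : ℕ) :
    ∑ j ∈ Finset.range (n + 1), (Nat.choose (n + 1) j : ℚ) * DD j k
      = -(DD (n + 1) (k + 1)) := by
  have h1 : ∑ j ∈ Finset.range (n + 1), (Nat.choose (n + 1) j : ℚ) * DD j k
      = ∑ r ∈ Finset.range (k + 1), ∑ j ∈ Finset.range (n + 1),
          (-1 : ℚ) ^ r * (Nat.choose k r : ℚ) * ((Nat.choose (n + 1) j : ℚ) * (r : ℚ) ^ j) := by
    rw [Finset.sum_comm]
    refine Finset.sum_congr rfl fun j _ => ?_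
    rw [DD, Finset.mul_sum]
    refine Finset.sum_congr rfl fun r _ => by ring
  rw [h1]
  have h2 : ∀ r ∈ Finset.range (k + 1),
      ∑ j ∈ Finset.range (n + 1),
          (-1 : ℚ) ^ r * (Nat.choose k r : ℚ) * ((Nat.choose (n + 1) j : ℚ) * (r : ℚ) ^ j)
      = (-1 : ℚ) ^ r * (Nat.choose k r : ℚ) * (((r : ℚ) + 1) ^ (n + 1) - (r : ℚ) ^ (n + 1)) := by
    intro r _
    rw [← Finset.mul_sum, binom_partial]
  rw [Finset.sum_congr rfl h2]
  have h3 : ∑ r ∈ Finset.range (k + 1),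
      (-1 : ℚ) ^ r * (Nat.choose k r : ℚ) * (((r : ℚ) + 1) ^ (n + 1) - (r : ℚ) ^ (n + 1))
      = (∑ r ∈ Finset.range (k + 1), (-1 : ℚ) ^ r * (Nat.choose k r : ℚ) * ((r : ℚ) + 1) ^ (n + 1))
        - ∑ r ∈ Finset.range (k + 1), (-1 : ℚ) ^ r * (Nat.choose k r : ℚ) * (r : ℚ) ^ (n + 1) := by
    rw [← Finset.sum_sub_distrib]
    refine Finset.sum_congr rfl fun r _ => by ring
  rw [h3, DD_shift]
  show DD (n + 1) k - DD (n + 1) (k + 1) - DD (n + 1) k = _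
  ring

private lemma key_identity (n : ℕ) (hn : 1 ≤ n) :
    ∑ j ∈ Finset.range (n + 1), (Nat.choose (n + 1) j : ℚ) *
      (∑ k ∈ Finset.range (j + 1), (1 : ℚ) / (k + 1) * DD j k) = 0 := by
  have hext : ∀ j ∈ Finset.range (n + 1),
      (∑ k ∈ Finset.range (j + 1), (1 : ℚ) / (k + 1) * DD j k)
      = ∑ k ∈ Finset.range (n + 1), (1 : ℚ) / (k + 1) * DD j k := by
    intro j hj
    rw [Finset.mem_range] at hj
    apply Finset.sum_subset
    · exact Finset.range_subset_range.2 (by omega)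
    · intro k _ hk
      rw [Finset.mem_range, not_lt] at hk
      rw [DD_vanish j k (by omega), mul_zero]
  calc ∑ j ∈ Finset.range (n + 1), (Nat.choose (n + 1) j : ℚ) *
        (∑ k ∈ Finset.range (j + 1), (1 : ℚ) / (k + 1) * DD j k)
      = ∑ j ∈ Finset.range (n + 1), ∑ k ∈ Finset.range (n + 1),
          (Nat.choose (n + 1) j : ℚ) * ((1 : ℚ) / (k + 1) * DD j k) := by
        refine Finset.sum_congr rfl fun j hj => ?_
        rw [hext j hj, Finset.mul_sum]
    _ = ∑ k ∈ Finset.range (n + 1), ∑ j ∈ Finset.range (n + 1),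
          (Nat.choose (n + 1) j : ℚ) * ((1 : ℚ) / (k + 1) * DD j k) := Finset.sum_comm
    _ = ∑ k ∈ Finset.range (n + 1), (1 : ℚ) / (k + 1) *
          (∑ j ∈ Finset.range (n + 1), (Nat.choose (n + 1) j : ℚ) * DD j k) := by
        refine Finset.sum_congr rfl fun k _ => ?_
        rw [Finset.mul_sum]
        refine Finset.sum_congr rfl fun j _ => by ring
    _ = ∑ k ∈ Finset.range (n + 1), (1 : ℚ) / (k + 1) * (-(DD (n + 1) (k + 1))) := by
        refine Finset.sum_congr rfl fun k _ => ?_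
        rw [DD_inner]
    _ = -(∑ k ∈ Finset.range (n + 1), (1 : ℚ) / (k + 1) * DD (n + 1) (k + 1)) := by
        rw [← Finset.sum_neg_distrib]
        refine Finset.sum_congr rfl fun k _ => by ring
    _ = 0 := by rw [DD_telescope n hn, neg_zero]

theorem bernoulli_double_sum (n : ℕ) :
    bernoulli n =
      ∑ k ∈ Finset.range (n + 1),
        (1 : ℚ) / (k + 1) *
          ∑ r ∈ Finset.range (k + 1), (-1 : ℚ) ^ r * (Nat.choose k r : ℚ) * (r : ℚ) ^ n := by
  induction n using Nat.strong_induction_on with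
  | _ n ih =>
    match n with
    | 0 =>
      simp [bernoulli_zero]
    | Nat.succ m =>
      have hkey := key_identity (m + 1) (by omega)
      have hbern := sum_bernoulli (m + 2)
      rw [if_neg (by omega)] at hbern
      rw [Finset.sum_range_succ] at hbern hkey
      have hch : (Nat.choose (m + 2) (m + 1) : ℚ) = (m : ℚ) + 2 := by
        rw [Nat.choose_succ_self_right]
        push_cast; ring
      have hih : ∀ j ∈ Finset.range (m + 1),
          (Nat.choose (m + 2) j : ℚ) * bernoulli j
          = (Nat.choose (m + 2) j : ℚ) * (∑ k ∈ Finset.range (j + 1), (1 : ℚ) / (k + 1) * DD j k) := by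
        intro j hj
        rw [Finset.mem_range] at hj
        rw [ih j (by omega)]
        rfl
      rw [Finset.sum_congr rfl hih] at hbern
      have h2 : ((m : ℚ) + 2) * bernoulli (m + 1)
          = ((m : ℚ) + 2) * (∑ k ∈ Finset.range (m + 2), (1 : ℚ) / (k + 1) * DD (m + 1) k) := by
      -- hbern : ∑ + C * bernoulli (m+1) = 0 ; hkey : ∑ + C * f(m+1) = 0
        have e1 : ((m : ℚ) + 2) * bernoulli (m + 1)
            = -∑ j ∈ Finset.range (m + 1), (Nat.choose (m + 2) j : ℚ) *
                (∑ k ∈ Finset.range (j + 1), (1 : ℚ) / (k + 1) * DD j k) := by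
          rw [hch] at hbern; linarith [hbern]
        have e2 : ((m : ℚ) + 2) * (∑ k ∈ Finset.range (m + 2), (1 : ℚ) / (k + 1) * DD (m + 1) k)
            = -∑ j ∈ Finset.range (m + 1), (Nat.choose (m + 2) j : ℚ) *
                (∑ k ∈ Finset.range (j + 1), (1 : ℚ) / (k + 1) * DD j k) := by
          rw [hch] at hkey; linarith [hkey]
        rw [e1, e2]
      have hm2 : ((m : ℚ) + 2) ≠ 0 := by positivity
      have := mul_left_cancel₀ hm2 h2
      rw [this]
      rfl
end

section
/- For every natural number n, \(\sum_{k=0}^{n} \binom{6n+3}{6k} B_{6k} = 2n+1\). -/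
/-!
Write `N = 6n + 3` and let `ζ` be a primitive sixth root of unity. Since
`B_N(x) = ∑ᵢ C(N, i) Bᵢ x^(N-i)` and `N - i + 3 ≡ -i (mod 6)`, the roots-of-unity filter gives
`6 ∑ₖ C(N, 6k) B₆ₖ = ∑ᵣ ζ^(3r) B_N(ζ^r) = ∑ᵣ (-1)^r B_N(ζ^r)`.
The sixth roots of unity pair up under `z ↦ 1 + z` (`0 ↦ 1`, `-1 ↦ 0`, `ζ² ↦ ζ`, `ζ⁴ ↦ ζ⁵`,
using `ζ² = ζ - 1`), so the difference equation `B_N(1 + z) - B_N(z) = N z^(N-1)` and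
`B_N(0) = B_N = 0` evaluate the alternating sum to `N (1 - ζ⁴ - ζ⁸) = 2N`.
-/

open Finset

namespace IsPrimitiveRoot

variable {R : Type*} [CommRing R] [IsDomain R] {ζ : R} {d : ℕ}

theorem geom_sum_pow_eq_ite (hζ : IsPrimitiveRoot ζ d) (j : ℕ) :
    ∑ r ∈ range d, (ζ ^ j) ^ r = if d ∣ j then (d : R) else 0 := by
  split_ifs with hd
  · simp [(hζ.pow_eq_one_iff_dvd j).mpr hd]
  · have hne : ζ ^ j - 1 ≠ 0 := sub_ne_zero.mpr fun h => hd ((hζ.pow_eq_one_iff_dvd j).mp h)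
    refine (mul_eq_zero.mp ?_).resolve_right hne
    rw [geom_sum_mul, ← pow_mul, mul_comm, pow_mul, hζ.pow_eq_one, one_pow, sub_self]

theorem sum_range_sum_mul_pow {ι : Type*} (hζ : IsPrimitiveRoot ζ d) (s : Finset ι)
    (a : ι → R) (e : ι → ℕ) :
    ∑ r ∈ range d, ∑ i ∈ s, a i * (ζ ^ r) ^ e i = d * ∑ i ∈ s with d ∣ e i, a i := by
  simp_rw [← pow_mul, mul_comm _ (e _), pow_mul]
  rw [sum_comm, sum_filter, mul_sum]
  refine sum_congr rfl fun i _ => ?_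
  rw [← mul_sum, hζ.geom_sum_pow_eq_ite]
  split_ifs <;> simp [mul_comm]

end IsPrimitiveRoot

theorem Finset.sum_range_filter_dvd {M : Type*} [AddCommMonoid M] {d m n : ℕ}
    (hlo : d * n < m) (hhi : m ≤ d * (n + 1)) (f : ℕ → M) :
    ∑ i ∈ range m with d ∣ i, f i = ∑ k ∈ range (n + 1), f (d * k) := by
  have hd : 0 < d := Nat.pos_of_ne_zero (by rintro rfl; omega)
  have himage : {i ∈ range m | d ∣ i} = (range (n + 1)).image (d * ·) := by
    ext i
    simp only [mem_filter, mem_range, mem_image]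
    constructor
    · rintro ⟨hi, k, rfl⟩
      exact ⟨k, Nat.lt_of_mul_lt_mul_left (hi.trans_le hhi), rfl⟩
    · rintro ⟨k, hk, rfl⟩
      exact ⟨(Nat.mul_le_mul_left d (Nat.lt_succ_iff.mp hk)).trans_lt hlo, dvd_mul_right d k⟩
  rw [himage, sum_image fun x _ y _ h => Nat.eq_of_mul_eq_mul_left hd h]

namespace Polynomial

variable {A : Type*} [CommRing A] [Algebra ℚ A]

theorem aeval_bernoulli (N : ℕ) (z : A) :
    aeval z (bernoulli N) =
      ∑ i ∈ range (N + 1), algebraMap ℚ A (_root_.bernoulli i * N.choose i) * z ^ (N - i) := by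
  simp [bernoulli, aeval_monomial]

theorem aeval_bernoulli_one_add (N : ℕ) (z : A) :
    aeval (1 + z) (bernoulli N) = aeval z (bernoulli N) + N * z ^ (N - 1) := by
  simpa [aeval_comp] using congr(aeval z $(bernoulli_comp_one_add_X N))

end Polynomial

section SixthRoots

open Polynomial

variable {R : Type*} [CommRing R] [IsDomain R] [Algebra ℚ R] {ζ : R}

theorem IsPrimitiveRoot.sum_pow_three_mul_aeval_bernoulli_eq_six_mul (hζ : IsPrimitiveRoot ζ 6)
    (n : ℕ) :
    ∑ r ∈ range 6, (ζ ^ r) ^ 3 * aeval (ζ ^ r) (bernoulli (6 * n + 3)) =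
      6 * algebraMap ℚ R
        (∑ k ∈ range (n + 1), (Nat.choose (6 * n + 3) (6 * k) : ℚ) * _root_.bernoulli (6 * k)) := by
  simp_rw [aeval_bernoulli, mul_sum, mul_left_comm _ (algebraMap ℚ R _), ← pow_add]
  rw [hζ.sum_range_sum_mul_pow, filter_congr fun i hi => show 6 ∣ 3 + (6 * n + 3 - i) ↔ 6 ∣ i by
    rw [mem_range] at hi; omega]
  rw [sum_range_filter_dvd (n := n) (by omega) (by omega), map_sum]
  simp [mul_comm]

theorem IsPrimitiveRoot.sum_pow_three_mul_aeval_bernoulli (hζ : IsPrimitiveRoot ζ 6) (n : ℕ) :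
    ∑ r ∈ range 6, (ζ ^ r) ^ 3 * aeval (ζ ^ r) (bernoulli (6 * n + 3)) = 2 * (6 * n + 3) := by
  set N := 6 * n + 3
  have h2 : ζ ^ 2 - ζ + 1 = 0 := by
    simpa [cyclotomic_six] using hζ.isRoot_cyclotomic (by norm_num)
  have h3 : ζ ^ 3 = -1 := by linear_combination (ζ + 1) * h2
  have hpow (k : ℕ) : (ζ ^ k) ^ 6 = 1 := by
    rw [← pow_mul, mul_comm, pow_mul, hζ.pow_eq_one, one_pow]
  have hshift (z : R) (hz : z ^ 6 = 1) :
      aeval (1 + z) (bernoulli N) = aeval z (bernoulli N) + N * z ^ 2 := by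
    rw [aeval_bernoulli_one_add, show N - 1 = 6 * n + 2 by omega, pow_add, pow_mul, hz, one_pow,
      one_mul]
  have hB_zero : aeval (0 : R) (bernoulli N) = 0 := by
    rw [← map_zero (algebraMap ℚ R), aeval_algebraMap_apply_eq_algebraMap_eval,
      bernoulli_eval_zero, bernoulli_eq_zero_of_odd ⟨3 * n + 1, by omega⟩ (by omega), map_zero]
  have hB_one : aeval (1 : R) (bernoulli N) = 0 := by
    simpa [hB_zero, zero_pow (show N - 1 ≠ 0 by omega)] using aeval_bernoulli_one_add N (0 : R)
  have hB_neg_one : aeval (ζ ^ 3) (bernoulli N) = -N := by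
    have h := hshift (-1) (by norm_num)
    rw [add_neg_cancel, hB_zero, neg_one_sq, mul_one] at h
    rw [h3]
    linear_combination -h
  have hB_ζ : aeval ζ (bernoulli N) = aeval (ζ ^ 2) (bernoulli N) + N * (ζ ^ 2) ^ 2 := by
    have h := hshift _ (hpow 2)
    rwa [show 1 + ζ ^ 2 = ζ by linear_combination h2] at h
  have hB_ζ5 : aeval (ζ ^ 5) (bernoulli N) = aeval (ζ ^ 4) (bernoulli N) + N * (ζ ^ 4) ^ 2 := by
    have h := hshift _ (hpow 4)
    rwa [show 1 + ζ ^ 4 = ζ ^ 5 by linear_combination (1 + ζ - ζ ^ 3) * h2] at h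
  have hN : (N : R) = 6 * n + 3 := by push_cast [N]; ring
  simp_rw [← pow_mul, mul_comm _ 3, pow_mul, h3]
  simp only [sum_range_succ, sum_range_zero, pow_zero, pow_one]
  linear_combination hB_one - hB_ζ - hB_neg_one - hB_ζ5 + 2 * hN -
    (N : R) * (ζ ^ 2 + ζ + 1) * (ζ ^ 4 - ζ ^ 2 + 1) * h2

end SixthRoots

theorem sum_choose_bernoulli_6k (n : ℕ) :
    ∑ k ∈ Finset.range (n + 1), (Nat.choose (6 * n + 3) (6 * k) : ℚ) * bernoulli (6 * k) =
      2 * n + 1 := by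
  have hζ := Complex.isPrimitiveRoot_exp 6 (by norm_num)
  have h := (hζ.sum_pow_three_mul_aeval_bernoulli_eq_six_mul n).symm.trans
    (hζ.sum_pow_three_mul_aeval_bernoulli n)
  apply (algebraMap ℚ ℂ).injective
  rw [map_add, map_mul, map_natCast, map_ofNat, map_one]
  linear_combination h / 6
end

section
/- (Clausen–von Staudt theorem) For every positive integer k, the rational number \(B_{2k} + \sum_{p \text{ prime},\ (p-1) \mid 2k} \frac{1}{p}\) is an integer, where the sum runs over all primes p such that p - 1 divides 2k. -/
open Finset

theorem clausen_von_staudt_general (k : ℕ) :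
    ∃ z : ℤ,
      bernoulli (2 * k) +
          ∑ p ∈ (Finset.range (2 * k + 2)).filter (fun p => p.Prime ∧ (p - 1) ∣ 2 * k),
            (1 : ℚ) / p =
        (z : ℚ) := by
  obtain ⟨z, hz⟩ := Bernoulli.vonStaudt_clausen k
  exact ⟨z, hz.symm⟩

theorem clausen_von_staudt (k : ℕ) (hk : 0 < k) :
    ∃ z : ℤ,
      bernoulli (2 * k) +
          ∑ p ∈ (Finset.range (2 * k + 2)).filter (fun p => p.Prime ∧ (p - 1) ∣ 2 * k),
            (1 : ℚ) / p =
        (z : ℚ) :=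
  clausen_von_staudt_general k
end
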